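/- arXiv:1802.03939 — 3 statements merged into one kernel-verified Lean document; each statement's English description precedes it below -/
import Mathlib

section
/- If K is an H-hull contained in the ball B(x, ε) for some real x, then the half-plane capacity of K satisfies hcap(K) ≤ ε²/2. -/
/-!
Compare `Ψ` with `φ z = z + ε² / (z - x)` on `W = ℍ \ B̄(x, ε) ⊆ ℍ \ K`. The harmonic function
`Im (φ - Ψ)` is below `Im φ` (as `Im Ψ > 0`), which is small near the real axis and near the
half-circle, and it is small near infinity because `Ψ z - z → 0`. By the maximum principle
`Im φ ≤ Im Ψ` on `W`. On the imaginary axis this reads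
`Re ((Ψ (iy) - iy) iy) = y (y - Im Ψ (iy)) ≤ y (y - Im φ (iy)) ≤ ε²`,
and the left side tends to `2 hcap K`.
-/

open Filter Set

noncomputable section

/-- The open upper half-plane. -/
def UHP : Set ℂ := {z : ℂ | 0 < z.im}

/-- `K` is an `ℍ`-hull: a compact subset of the closed upper half-plane with
`K = closure (ℍ ∩ K)` and simply connected complement `ℍ \ K`. -/
def IsHHull (K : Set ℂ) : Prop :=
  IsCompact K ∧ K ⊆ closure UHP ∧ K = closure (UHP ∩ K) ∧
    IsConnected (UHP \ K) ∧ SimplyConnectedSpace ↥(UHP \ K)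

/-- `a` is the half-plane capacity of the hull `K`, witnessed by the conformal map
`Ψ : ℍ \ K → ℍ` with expansion `Ψ z = z + 2a/z + o(1/z)` at infinity. -/
def IsHalfPlaneCap (K : Set ℂ) (Ψ : ℂ → ℂ) (a : ℝ) : Prop :=
  DifferentiableOn ℂ Ψ (UHP \ K) ∧ Set.BijOn Ψ (UHP \ K) UHP ∧
  Tendsto (fun z => (Ψ z - z) * z) (Bornology.cobounded ℂ ⊓ 𝓟 (UHP \ K))
    (nhds ((2 * a : ℝ) : ℂ))

open Metric Bornology Topology

theorem Complex.im_le_of_forall_mem_frontier_im_le {E : Type*} [NormedAddCommGroup E]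
    [NormedSpace ℂ E] [Nontrivial E] {f : E → ℂ} {U : Set E} {M : ℝ} (hU : IsBounded U)
    (hf : DiffContOnCl ℂ f U) (hM : ∀ z ∈ frontier U, (f z).im ≤ M) {z : E}
    (hz : z ∈ closure U) : (f z).im ≤ M := by
  have norm_exp : ∀ w, ‖Complex.exp (-Complex.I * f w)‖ = Real.exp (f w).im := by
    simp [Complex.norm_exp]
  have hg : DiffContOnCl ℂ (fun w => Complex.exp (-Complex.I * f w)) U :=
    Complex.differentiable_exp.comp_diffContOnCl (hf.const_smul (-Complex.I))
  have := Complex.norm_le_of_forall_mem_frontier_norm_le hU hg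
    (fun w hw => (norm_exp w).trans_le (Real.exp_le_exp.2 (hM w hw))) hz
  rwa [norm_exp, Real.exp_le_exp] at this

/-- Maps `UHP \ closedBall x ε` conformally onto `UHP`, so the half-disc has capacity
`ε ^ 2 / 2`. -/
def halfDiscMap (x ε : ℝ) (z : ℂ) : ℂ := z + ε ^ 2 / (z - x)

section halfDiscMap

variable {x ε : ℝ} {z : ℂ}

theorem halfDiscMap_im : (halfDiscMap x ε z).im = z.im - ε ^ 2 * z.im / ‖z - x‖ ^ 2 := by
  have h : (ε : ℂ) ^ 2 / (z - x) = ((ε ^ 2 : ℝ) : ℂ) * (z - x)⁻¹ := by push_cast; ring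
  rw [halfDiscMap, Complex.add_im, h, Complex.im_ofReal_mul, Complex.inv_im, Complex.sq_norm]
  simp only [Complex.sub_im, Complex.ofReal_im, sub_zero]
  ring

theorem halfDiscMap_im_le (hz : 0 ≤ z.im) : (halfDiscMap x ε z).im ≤ z.im := by
  rw [halfDiscMap_im]
  have : 0 ≤ ε ^ 2 * z.im / ‖z - x‖ ^ 2 := by positivity
  linarith

theorem halfDiscMap_im_le_of_le_norm_sub (hε : 0 < ε) (hεz : ε ≤ ‖z - x‖) :
    (halfDiscMap x ε z).im ≤ 2 * (‖z - x‖ - ε) := by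
  have him : z.im ≤ ‖z - x‖ := by
    simpa using (le_abs_self _).trans (Complex.abs_im_le_norm (z - x))
  have hr : 0 < ‖z - x‖ := hε.trans_le hεz
  rw [halfDiscMap_im, sub_le_iff_le_add, ← sub_le_iff_le_add', le_div_iff₀ (by positivity)]
  have hsq : 0 ≤ ‖z - x‖ ^ 2 - ε ^ 2 := by nlinarith
  nlinarith [mul_le_mul_of_nonneg_right him hsq, mul_nonneg hr.le (sub_nonneg.2 hεz),
    mul_nonneg (mul_nonneg hr.le (sub_nonneg.2 hεz)) (sub_nonneg.2 hεz)]

theorem differentiableAt_halfDiscMap (hz : z ≠ x) : DifferentiableAt ℂ (halfDiscMap x ε) z :=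
  differentiableAt_id.add ((differentiableAt_const _).div
    (differentiableAt_id.sub (differentiableAt_const _)) (sub_ne_zero.2 hz))

theorem mul_sub_halfDiscMap_im_mul_I_le (y : ℝ) :
    y * (y - (halfDiscMap x ε (y * Complex.I)).im) ≤ ε ^ 2 := by
  have hnorm : ‖(y : ℂ) * Complex.I - x‖ ^ 2 = x ^ 2 + y ^ 2 := by
    rw [show (y : ℂ) * Complex.I - x = ((-x : ℝ) : ℂ) + y * Complex.I by push_cast; ring,
      Complex.sq_norm, Complex.normSq_add_mul_I, neg_sq]
  rw [halfDiscMap_im, hnorm, Complex.mul_I_im, Complex.ofReal_re, sub_sub_cancel, mul_div_assoc']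
  exact div_le_of_le_mul₀ (by positivity) (sq_nonneg ε)
    (by nlinarith [mul_nonneg (sq_nonneg x) (sq_nonneg ε)])

end halfDiscMap

theorem mem_UHP_sdiff_closedBall {x ε : ℝ} {w : ℂ} :
    w ∈ UHP \ closedBall (x : ℂ) ε ↔ 0 < w.im ∧ ε < ‖w - x‖ := by
  simp [UHP, dist_eq_norm]

theorem halfDiscMap_im_sub_im_le_of_edge {Ψ : ℂ → ℂ} {x ε η R c : ℝ} (hε : 0 < ε)
    (hηc : 2 * η ≤ c) (hmaps : MapsTo Ψ (UHP \ closedBall (x : ℂ) ε) UHP)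
    (hfar : ∀ w ∈ UHP \ closedBall (x : ℂ) ε, R ≤ ‖w‖ → ‖Ψ w - w‖ ≤ c) {w : ℂ}
    (hw : w ∈ UHP \ closedBall (x : ℂ) ε) (hedge : w.im = η ∨ ‖w - x‖ = ε + η ∨ ‖w‖ = R) :
    (halfDiscMap x ε w).im - (Ψ w).im ≤ c := by
  obtain ⟨him, hwx⟩ := mem_UHP_sdiff_closedBall.1 hw
  have hΨw : 0 < (Ψ w).im := hmaps hw
  have hle_im := halfDiscMap_im_le (x := x) (ε := ε) him.le
  rcases hedge with hη | hη | hR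
  · linarith
  · linarith [halfDiscMap_im_le_of_le_norm_sub hε hwx.le]
  · have hnear : -(Ψ w - w).im ≤ ‖Ψ w - w‖ := (neg_le_abs _).trans (Complex.abs_im_le_norm _)
    rw [Complex.sub_im] at hnear
    linarith [hfar w hw hR.ge]

theorem halfDiscMap_im_sub_im_le {Ψ : ℂ → ℂ} {x ε η R c : ℝ} (hε : 0 < ε) (hη : 0 < η)
    (hηc : 2 * η ≤ c) (hdiff : DifferentiableOn ℂ Ψ (UHP \ closedBall (x : ℂ) ε))
    (hmaps : MapsTo Ψ (UHP \ closedBall (x : ℂ) ε) UHP)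
    (hfar : ∀ w ∈ UHP \ closedBall (x : ℂ) ε, R ≤ ‖w‖ → ‖Ψ w - w‖ ≤ c) {z : ℂ}
    (hz : η < z.im ∧ ε + η < ‖z - x‖ ∧ ‖z‖ < R) :
    (halfDiscMap x ε z).im - (Ψ z).im ≤ c := by
  set W := UHP \ closedBall (x : ℂ) ε
  -- The truncated region `η < Im w`, `ε + η < ‖w - x‖`, `‖w‖ < R`, written as `0 < m w` so that
  -- `closure_lt_subset_le` and `frontier_lt_subset_eq` describe its closure and frontier.
  set m : ℂ → ℝ := fun w => min (w.im - η) (min (‖w - x‖ - (ε + η)) (R - ‖w‖))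
  have hm : Continuous m := by fun_prop
  have hmW {w : ℂ} (hw : 0 ≤ m w) : w ∈ W := by
    simp only [m, le_min_iff, sub_nonneg] at hw
    exact mem_UHP_sdiff_closedBall.2 ⟨hη.trans_le hw.1, by linarith⟩
  have hbdd : IsBounded {w | 0 < m w} := (isBounded_ball (x := (0 : ℂ)) (r := R)).subset
    fun w hw => by
      change 0 < m w at hw
      simp only [m, lt_min_iff, sub_pos] at hw
      simpa using hw.2.2
  have hdiffAt {w : ℂ} (hw : w ∈ W) :
      DifferentiableAt ℂ (fun w => halfDiscMap x ε w - Ψ w) w := by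
    have hopen : IsOpen W :=
      (isOpen_lt continuous_const Complex.continuous_im).sdiff isClosed_closedBall
    refine (differentiableAt_halfDiscMap ?_).sub (hdiff.differentiableAt (hopen.mem_nhds hw))
    rintro rfl
    simpa [hε.le] using hw.2
  have hfrontier : ∀ w ∈ frontier {w | 0 < m w}, (halfDiscMap x ε w - Ψ w).im ≤ c := by
    intro w hw
    have hmw : m w = 0 := (frontier_lt_subset_eq continuous_const hm hw).symm
    rw [Complex.sub_im]
    refine halfDiscMap_im_sub_im_le_of_edge hε hηc hmaps hfar (hmW hmw.ge) ?_
    simp only [m] at hmw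
    rcases min_choice (w.im - η) (min (‖w - x‖ - (ε + η)) (R - ‖w‖)) with h | h <;>
      rw [h] at hmw
    · exact .inl (by linarith)
    rcases min_choice (‖w - x‖ - (ε + η)) (R - ‖w‖) with h | h <;> rw [h] at hmw
    · exact .inr (.inl (by linarith))
    · exact .inr (.inr (by linarith))
  have hmz : 0 < m z := by
    simp only [m, lt_min_iff, sub_pos]
    exact ⟨hz.1, hz.2.1, hz.2.2⟩
  rw [← Complex.sub_im]
  exact Complex.im_le_of_forall_mem_frontier_im_le hbdd
    ⟨fun w hw => (hdiffAt (hmW (le_of_lt hw))).differentiableWithinAt,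
      fun w hw => (hdiffAt (hmW (closure_lt_subset_le continuous_const hm hw))).continuousAt
        |>.continuousWithinAt⟩
    hfrontier (subset_closure hmz)

theorem halfDiscMap_im_le_im_of_tendsto {Ψ : ℂ → ℂ} {x ε : ℝ} (hε : 0 < ε)
    (hdiff : DifferentiableOn ℂ Ψ (UHP \ closedBall (x : ℂ) ε))
    (hmaps : MapsTo Ψ (UHP \ closedBall (x : ℂ) ε) UHP)
    (hlim : Tendsto (fun z => Ψ z - z) (cobounded ℂ ⊓ 𝓟 (UHP \ closedBall (x : ℂ) ε)) (𝓝 0))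
    {z : ℂ} (hz : z ∈ UHP \ closedBall (x : ℂ) ε) : (halfDiscMap x ε z).im ≤ (Ψ z).im := by
  obtain ⟨hz_im, hz_norm⟩ := mem_UHP_sdiff_closedBall.1 hz
  refine le_of_forall_pos_le_add fun c hc => ?_
  obtain ⟨R, -, hR⟩ := hasBasis_cobounded_norm.eventually_iff.1 <|
    eventually_inf_principal.1 (hlim.norm.eventually_le_const (by simpa using hc))
  set δ := min c (min z.im (‖z - x‖ - ε))
  have hδ : 0 < δ := lt_min hc (lt_min hz_im (sub_pos.2 hz_norm))
  have hδc : δ ≤ c := min_le_left _ _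
  have hδz : δ ≤ z.im ∧ δ ≤ ‖z - x‖ - ε :=
    ⟨(min_le_right _ _).trans (min_le_left _ _), (min_le_right _ _).trans (min_le_right _ _)⟩
  have hzR : ‖z‖ < max R (‖z‖ + 1) := (lt_add_one _).trans_le (le_max_right _ _)
  have := halfDiscMap_im_sub_im_le (z := z) hε (half_pos hδ) (by linarith) hdiff hmaps
    (fun w hw hRw => hR ((le_max_left _ _).trans hRw) hw) ⟨by linarith, by linarith, hzR⟩
  linarith

theorem tendsto_zero_of_tendsto_mul_cobounded {𝕜 α : Type*} [NormedField 𝕜] {l : Filter α}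
    {f : α → 𝕜} {g : α → 𝕜} {b : 𝕜} (hf : Tendsto (fun z => g z * f z) l (𝓝 b))
    (hl : Tendsto f l (cobounded 𝕜)) : Tendsto g l (𝓝 0) := by
  have hinv := (hf.mul (tendsto_inv₀_cobounded.comp hl)).congr' <|
    (hl.eventually_ne_cobounded 0).mono fun z hz => mul_inv_cancel_right₀ hz (g z)
  simpa using hinv

theorem re_sub_mul_I_mul_mul_I (w : ℂ) (y : ℝ) :
    ((w - y * Complex.I) * (y * Complex.I)).re = y * (y - w.im) := by
  simp only [Complex.mul_re, Complex.sub_re, Complex.sub_im, Complex.mul_I_im,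
    Complex.ofReal_re, Complex.ofReal_im, Complex.I_re, Complex.I_im]
  ring

theorem tendsto_ofReal_mul_I_atTop (x ε : ℝ) :
    Tendsto (fun y : ℝ => (y : ℂ) * Complex.I) atTop
      (cobounded ℂ ⊓ 𝓟 (UHP \ closedBall (x : ℂ) ε)) := by
  refine tendsto_inf.2 ⟨?_, tendsto_principal.2 ?_⟩
  · rw [← tendsto_norm_atTop_iff_cobounded]
    simpa using tendsto_abs_atTop_atTop
  · filter_upwards [eventually_gt_atTop (max ε 0)] with y hy
    rw [max_lt_iff] at hy
    have him : ((y : ℂ) * Complex.I - x).im = y := by simp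
    have hnorm := (le_abs_self _).trans (Complex.abs_im_le_norm ((y : ℂ) * Complex.I - x))
    rw [him] at hnorm
    exact mem_UHP_sdiff_closedBall.2 ⟨by simpa using hy.2, by linarith⟩

theorem hcap_le_of_subset_ball_general (K : Set ℂ) (x ε : ℝ) (hε : 0 < ε)
    (hsub : K ⊆ Metric.ball (x : ℂ) ε)
    (Ψ : ℂ → ℂ) (a : ℝ) (h : IsHalfPlaneCap K Ψ a) :
    a ≤ ε ^ 2 / 2 := by
  obtain ⟨hdiff, hbij, hlim⟩ := h
  have hWK : UHP \ closedBall (x : ℂ) ε ⊆ UHP \ K :=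
    sdiff_subset_sdiff_right (hsub.trans ball_subset_closedBall)
  have hlimW := hlim.mono_left (inf_le_inf_left _ (principal_mono.2 hWK))
  have hcomp {z : ℂ} (hz : z ∈ UHP \ closedBall (x : ℂ) ε) :=
    halfDiscMap_im_le_im_of_tendsto hε (hdiff.mono hWK) (hbij.mapsTo.mono_left hWK)
      (tendsto_zero_of_tendsto_mul_cobounded (f := id) hlimW (tendsto_inf_left tendsto_id)) hz
  have haxis := tendsto_ofReal_mul_I_atTop x ε
  have hre := (Complex.continuous_re.tendsto _).comp (hlimW.comp haxis)
  have hbound : ∀ᶠ y : ℝ in atTop,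
      ((Ψ (y * Complex.I) - y * Complex.I) * (y * Complex.I)).re ≤ ε ^ 2 := by
    filter_upwards [tendsto_principal.1 (tendsto_inf.1 haxis).2, eventually_ge_atTop 0]
      with y hyW hy
    rw [re_sub_mul_I_mul_mul_I]
    exact (mul_le_mul_of_nonneg_left (sub_le_sub_left (hcomp hyW) y) hy).trans
      (mul_sub_halfDiscMap_im_mul_I_le y)
  have := le_of_tendsto hre hbound
  simp only [Complex.ofReal_re] at this
  linarith

/-- If an `ℍ`-hull `K` is contained in the ball `B(x, ε)` with `x ∈ ℝ`,
then `hcap K ≤ ε² / 2`. -/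
theorem hcap_le_of_subset_ball (K : Set ℂ) (x ε : ℝ) (hε : 0 < ε)
    (hK : IsHHull K) (hsub : K ⊆ Metric.ball (x : ℂ) ε)
    (Ψ : ℂ → ℂ) (a : ℝ) (h : IsHalfPlaneCap K Ψ a) :
    a ≤ ε ^ 2 / 2 :=
  hcap_le_of_subset_ball_general K x ε hε hsub Ψ a h
end
end

section
/- Let Ω be a bounded Jordan domain, γ : [0,T] → closure(Ω) continuous avoiding an interior point x₀, and Ω(t) the component of x₀ in Ω \ γ([0,t]). Then the closed set ℂ \ Ω(t) is locally connected. -/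
open Filter Set Metric

noncomputable section

/-- A bounded Jordan domain: a bounded open connected set whose boundary is a Jordan curve. -/
def IsJordanDomain (D : Set ℂ) : Prop :=
  IsOpen D ∧ IsConnected D ∧ Bornology.IsBounded D ∧
  ∃ γ : ℝ → ℂ, ContinuousOn γ (Set.Icc 0 1) ∧ γ 0 = γ 1 ∧
    Set.InjOn γ (Set.Ico 0 1) ∧ frontier D = γ '' Set.Icc 0 1

/-- A closed set `K ⊆ ℂ` is locally connected: for every `ε > 0` there is `δ > 0` such that
any two points of `K` at distance `< δ` lie in a connected subset of `K` of diameter `≤ ε`. -/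
def IsLocallyConnectedSet (K : Set ℂ) : Prop :=
  ∀ ε > (0:ℝ), ∃ δ > (0:ℝ), ∀ z ∈ K, ∀ w ∈ K, dist z w < δ →
    ∃ K₁ : Set ℂ, K₁ ⊆ K ∧ IsConnected K₁ ∧ z ∈ K₁ ∧ w ∈ K₁ ∧ Metric.diam K₁ ≤ ε

/-!
The frontier of `ℂ \ Ω(t)` lies in `γ[0,t] ∪ ∂Ω`, a union of two curves. A curve is, for every
`ε > 0`, a finite union of continua of diameter `≤ ε`; since finitely many disjoint compact sets
are a positive distance apart, this makes it uniformly locally connected. Local connectedness then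
passes from the frontier to a closed set `K`: two nearby points `z, w` of `K` are joined either
by the segment `[z, w] ⊆ K`, or by the initial pieces of `[z, w]` and `[w, z]` up to their first
frontier points, linked through a small connected subset of the frontier.
-/

open Topology

section PropertyS

variable {X Y : Type*} [PseudoMetricSpace X] [PseudoMetricSpace Y]

/-- A compact variant of Sierpiński's property S. -/
def HasPropertyS (K : Set X) : Prop :=
  ∀ ε > 0, ∃ P : Finset (Set X), ⋃₀ ↑P = K ∧ ∀ A ∈ P, IsCompact A ∧ IsConnected A ∧ diam A ≤ ε

theorem HasPropertyS.union {K L : Set X} (hK : HasPropertyS K) (hL : HasPropertyS L) :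
    HasPropertyS (K ∪ L) := by
  classical
  intro ε hε
  obtain ⟨P, rfl, hP⟩ := hK ε hε
  obtain ⟨Q, rfl, hQ⟩ := hL ε hε
  refine ⟨P ∪ Q, by rw [Finset.coe_union, sUnion_union], fun A hA => ?_⟩
  rcases Finset.mem_union.1 hA with hA | hA
  exacts [hP A hA, hQ A hA]

theorem HasPropertyS.image {K : Set X} {f : X → Y} (hK : HasPropertyS K)
    (hf : UniformContinuousOn f K) : HasPropertyS (f '' K) := by
  classical
  intro ε hε
  obtain ⟨δ, hδ, hfδ⟩ := Metric.uniformContinuousOn_iff.1 hf ε hε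
  obtain ⟨P, rfl, hP⟩ := hK (δ / 2) (half_pos hδ)
  refine ⟨P.image (f '' ·), by rw [Finset.coe_image, image_sUnion], fun B hB => ?_⟩
  obtain ⟨A, hA, rfl⟩ := Finset.mem_image.1 hB
  obtain ⟨hAc, hAconn, hAdiam⟩ := hP A hA
  have hAK : A ⊆ ⋃₀ ↑P := subset_sUnion_of_mem hA
  have hfA : ContinuousOn f A := hf.continuousOn.mono hAK
  refine ⟨hAc.image_of_continuousOn hfA, hAconn.image f hfA,
    diam_le_of_forall_dist_le hε.le ?_⟩
  rintro _ ⟨x, hx, rfl⟩ _ ⟨y, hy, rfl⟩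
  refine (hfδ x (hAK hx) y (hAK hy) ?_).le
  calc dist x y ≤ diam A := dist_le_diam_of_mem hAc.isBounded hx hy
    _ < δ := by linarith

theorem IsCompact.hasPropertyS_of_convex {E : Type*} [NormedAddCommGroup E] [NormedSpace ℝ E]
    {s : Set E} (hs : IsCompact s) (hconv : Convex ℝ s) : HasPropertyS s := by
  classical
  intro ε hε
  obtain ⟨t, hts, htfin, hcover⟩ := hs.finite_cover_balls (half_pos hε)
  refine ⟨htfin.toFinset.image (fun x => s ∩ closedBall x (ε / 2)), ?_, fun A hA => ?_⟩
  · refine (sUnion_subset ?_).antisymm fun y hy => ?_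
    · simp only [Finset.coe_image, forall_mem_image]
      exact fun x _ => inter_subset_left
    · obtain ⟨x, hx, hyx⟩ := mem_iUnion₂.1 (hcover hy)
      exact ⟨_, Finset.mem_coe.2 (Finset.mem_image_of_mem _ (htfin.mem_toFinset.2 hx)), hy,
        ball_subset_closedBall hyx⟩
  · obtain ⟨x, hx, rfl⟩ := Finset.mem_image.1 hA
    refine ⟨hs.inter_right isClosed_closedBall,
      (hconv.inter (convex_closedBall x _)).isConnected
        ⟨x, hts (htfin.mem_toFinset.1 hx), mem_closedBall_self (half_pos hε).le⟩, ?_⟩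
    calc diam (s ∩ closedBall x (ε / 2)) ≤ diam (closedBall x (ε / 2)) :=
          diam_mono inter_subset_right isBounded_closedBall
      _ ≤ 2 * (ε / 2) := diam_closedBall (half_pos hε).le
      _ = ε := by ring

theorem hasPropertyS_image_Icc {f : ℝ → X} {a b : ℝ} (hf : ContinuousOn f (Icc a b)) :
    HasPropertyS (f '' Icc a b) :=
  (isCompact_Icc.hasPropertyS_of_convex (convex_Icc a b)).image
    (isCompact_Icc.uniformContinuousOn_of_continuous hf)

theorem Finset.exists_pos_forall_dist_lt_inter_nonempty {Z : Type*} [MetricSpace Z]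
    (P : Finset (Set Z))
    (hP : ∀ A ∈ P, IsCompact A) :
    ∃ δ > 0, ∀ A ∈ P, ∀ B ∈ P, ∀ x ∈ A, ∀ y ∈ B, dist x y < δ → (A ∩ B).Nonempty := by
  have hev : ∀ᶠ δ in 𝓝[>] (0 : ℝ),
      ∀ A ∈ P, ∀ B ∈ P, ∀ x ∈ A, ∀ y ∈ B, dist x y < δ → (A ∩ B).Nonempty := by
    refine (Finset.eventually_all P).2 fun A hA => (Finset.eventually_all P).2 fun B hB => ?_
    by_cases hAB : (A ∩ B).Nonempty
    · exact Eventually.of_forall fun _ _ _ _ _ _ => hAB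
    have hAB' : A ⊆ Bᶜ := fun x hxA hxB => hAB ⟨x, hxA, hxB⟩
    obtain ⟨δ, hδ, hthick⟩ :=
      (hP A hA).exists_thickening_subset_open (hP B hB).isClosed.isOpen_compl hAB'
    filter_upwards [Ioo_mem_nhdsGT hδ] with r hr x hx y hy hxy
    exact absurd hy (hthick (mem_thickening_iff.2 ⟨x, hx, by rw [dist_comm]; linarith [hr.2]⟩))
  obtain ⟨δ, hδ, hδpos⟩ := (hev.and self_mem_nhdsWithin).exists
  exact ⟨δ, hδpos, hδ⟩

theorem HasPropertyS.isLocallyConnectedSet {K : Set ℂ} (hK : HasPropertyS K) :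
    IsLocallyConnectedSet K := by
  intro ε hε
  obtain ⟨P, rfl, hP⟩ := hK (ε / 2) (half_pos hε)
  obtain ⟨δ, hδ, hlink⟩ :=
    P.exists_pos_forall_dist_lt_inter_nonempty fun A hA => (hP A hA).1
  refine ⟨δ, hδ, fun z hz w hw hzw => ?_⟩
  obtain ⟨A, hA, hzA⟩ := mem_sUnion.1 hz
  obtain ⟨B, hB, hwB⟩ := mem_sUnion.1 hw
  have hAB := hlink A hA B hB z hzA w hwB hzw
  refine ⟨A ∪ B, union_subset (subset_sUnion_of_mem hA) (subset_sUnion_of_mem hB),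
    (hP A hA).2.1.union hAB (hP B hB).2.1, Or.inl hzA, Or.inr hwB, ?_⟩
  calc diam (A ∪ B) ≤ diam A + diam B := diam_union' hAB
    _ ≤ ε := by linarith [(hP A hA).2.2, (hP B hB).2.2]

end PropertyS

theorem exists_image_Icc_subset_mem_frontier {X : Type*} [TopologicalSpace X] {K : Set X}
    (hK : IsClosed K) {f : ℝ → X} (hf : Continuous f) {a b : ℝ} (hab : a ≤ b) (ha : f a ∈ K)
    (hb : f b ∉ K) : ∃ c ∈ Icc a b, f '' Icc a c ⊆ K ∧ f c ∈ frontier K := by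
  set T := {s ∈ Icc a b | f s ∉ K}
  have hbT : b ∈ T := ⟨⟨hab, le_rfl⟩, hb⟩
  have hbdd : BddBelow T := ⟨a, fun s hs => hs.1.1⟩
  have hac : a ≤ sInf T := le_csInf ⟨b, hbT⟩ fun s hs => hs.1.1
  have hcb : sInf T ≤ b := csInf_le hbdd hbT
  have hIcc : Icc a (sInf T) ⊆ f ⁻¹' K := by
    rcases hac.eq_or_lt with heq | hlt
    · rw [← heq, Icc_self, singleton_subset_iff]
      exact ha
    rw [← closure_Ico hlt.ne]
    refine (hK.preimage hf).closure_subset_iff.2 fun s hs => ?_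
    by_contra hsK
    exact notMem_of_lt_csInf hs.2 hbdd ⟨⟨hs.1, hs.2.le.trans hcb⟩, hsK⟩
  refine ⟨sInf T, ⟨hac, hcb⟩, image_subset_iff.2 hIcc, ?_⟩
  rw [frontier_eq_closure_inter_closure]
  exact ⟨subset_closure (hIcc ⟨hac, le_rfl⟩),
    map_mem_closure hf (csInf_mem_closure ⟨b, hbT⟩ hbdd) fun s hs => hs.2⟩

section Segment

variable {E : Type*} [NormedAddCommGroup E] [NormedSpace ℝ E]

theorem diam_segment (z w : E) : diam (segment ℝ z w) = dist z w := by
  rw [← convexHull_pair, convexHull_diam, diam_pair]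

theorem isBounded_segment (z w : E) : Bornology.IsBounded (segment ℝ z w) := by
  rw [← convexHull_pair]
  exact isBounded_convexHull.2 (toFinite _).isBounded

theorem exists_isConnected_subset_segment_inter_frontier {K : Set E} (hK : IsClosed K)
    {z w : E} (hz : z ∈ K) (hzw : ¬segment ℝ z w ⊆ K) :
    ∃ C ⊆ K, C ⊆ segment ℝ z w ∧ IsConnected C ∧ z ∈ C ∧ (C ∩ frontier K).Nonempty := by
  obtain ⟨v, hv, hvK⟩ := not_subset.1 hzw
  rw [segment_eq_image_lineMap] at hv ⊢
  obtain ⟨s, hs, rfl⟩ := hv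
  have hf : Continuous (AffineMap.lineMap z w : ℝ → E) := AffineMap.lineMap_continuous
  obtain ⟨c, hc, hsub, hfr⟩ := exists_image_Icc_subset_mem_frontier hK hf hs.1
    (by rwa [AffineMap.lineMap_apply_zero]) hvK
  exact ⟨_, hsub, image_mono (Icc_subset_Icc_right (hc.2.trans hs.2)),
    (isConnected_Icc hc.1).image _ hf.continuousOn,
    ⟨0, left_mem_Icc.2 hc.1, AffineMap.lineMap_apply_zero _ _⟩,
    ⟨_, mem_image_of_mem _ (right_mem_Icc.2 hc.1), hfr⟩⟩

end Segment

theorem IsLocallyConnectedSet.of_frontier_subset {K L : Set ℂ} (hK : IsClosed K) (hLK : L ⊆ K)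
    (hfr : frontier K ⊆ L) (hL : IsLocallyConnectedSet L) : IsLocallyConnectedSet K := by
  intro ε hε
  obtain ⟨δ, hδ, hLδ⟩ := hL (ε / 3) (by positivity)
  refine ⟨min δ (ε / 3), by positivity, fun z hz w hw hzw => ?_⟩
  have hsmall : ∀ C ⊆ segment ℝ z w, diam C ≤ ε / 3 := fun C hC =>
    (diam_mono hC (isBounded_segment z w)).trans
      ((diam_segment z w).trans_le (hzw.le.trans (min_le_right _ _)))
  by_cases hS : segment ℝ z w ⊆ K
  · exact ⟨_, hS, (convex_segment z w).isConnected ⟨z, left_mem_segment ℝ z w⟩,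
      left_mem_segment ℝ z w, right_mem_segment ℝ z w, (hsmall _ subset_rfl).trans (by linarith)⟩
  obtain ⟨A, hAK, hAS, hA, hzA, z', hz'A, hz'⟩ :=
    exists_isConnected_subset_segment_inter_frontier hK hz hS
  obtain ⟨B, hBK, hBS, hB, hwB, w', hw'B, hw'⟩ :=
    exists_isConnected_subset_segment_inter_frontier hK hw (segment_symm ℝ z w ▸ hS)
  rw [segment_symm] at hBS
  have hz'w' : dist z' w' < δ :=
    calc dist z' w' ≤ diam (segment ℝ z w) :=
          dist_le_diam_of_mem (isBounded_segment z w) (hAS hz'A) (hBS hw'B)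
      _ < δ := (diam_segment z w).trans_lt (hzw.trans_le (min_le_left _ _))
  obtain ⟨M, hML, hM, hz'M, hw'M, hMdiam⟩ := hLδ z' (hfr hz') w' (hfr hw') hz'w'
  refine ⟨A ∪ M ∪ B, union_subset (union_subset hAK (hML.trans hLK)) hBK,
    (hA.union ⟨z', hz'A, hz'M⟩ hM).union ⟨w', Or.inr hw'M, hw'B⟩ hB,
    Or.inl (Or.inl hzA), Or.inr hwB, ?_⟩
  calc diam (A ∪ M ∪ B) ≤ diam (A ∪ M) + diam B := diam_union' ⟨w', Or.inr hw'M, hw'B⟩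
    _ ≤ diam A + diam M + diam B := by gcongr; exact diam_union' ⟨z', hz'A, hz'M⟩
    _ ≤ ε := by linarith [hsmall A hAS, hsmall B hBS]

theorem IsOpen.frontier_connectedComponentIn_subset {X : Type*} [TopologicalSpace X]
    [LocallyConnectedSpace X] {U : Set X} (hU : IsOpen U) (x : X) :
    frontier (connectedComponentIn U x) ⊆ frontier U := by
  intro y hy
  rw [hU.connectedComponentIn.frontier_eq] at hy
  rw [hU.frontier_eq]
  refine ⟨closure_mono (connectedComponentIn_subset U x) hy.1, fun hyU => hy.2 ?_⟩
  obtain ⟨z, hzy, hzx⟩ :=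
    mem_closure_iff.1 hy.1 _ hU.connectedComponentIn (mem_connectedComponentIn hyU)
  rw [connectedComponentIn_eq hzx, ← connectedComponentIn_eq hzy]
  exact mem_connectedComponentIn hyU

theorem frontier_diff_subset {X : Type*} [TopologicalSpace X] (s t : Set X) :
    frontier (s \ t) ⊆ frontier s ∪ frontier t := by
  rw [sdiff_eq, ← frontier_compl t]
  exact (frontier_inter_subset s tᶜ).trans
    (union_subset_union inter_subset_left inter_subset_right)

theorem complement_locally_connected_general
    (D : Set ℂ) (hD : IsJordanDomain D) (x₀ : ℂ)
    (T : ℝ) (γ : ℝ → ℂ)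
    (hγ : ContinuousOn γ (Set.Icc 0 T))
    (t : ℝ) (ht : t ∈ Set.Ioc 0 T) :
    IsLocallyConnectedSet ((connectedComponentIn (D \ γ '' Set.Icc 0 t) x₀)ᶜ) := by
  obtain ⟨hDopen, -, -, g, hg, -, -, hgfr⟩ := hD
  have hγt : ContinuousOn γ (Icc 0 t) := hγ.mono (Icc_subset_Icc_right ht.2)
  have hΓ : IsClosed (γ '' Icc 0 t) := (isCompact_Icc.image_of_continuousOn hγt).isClosed
  have hU : IsOpen (D \ γ '' Icc 0 t) := hDopen.sdiff hΓ
  refine IsLocallyConnectedSet.of_frontier_subset (L := γ '' Icc 0 t ∪ frontier D)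
    hU.connectedComponentIn.isClosed_compl ?_ ?_ ?_
  · rintro x hxL hxΩ
    obtain ⟨hxD, hxΓ⟩ := connectedComponentIn_subset _ _ hxΩ
    rcases hxL with hx | hx
    · exact hxΓ hx
    · exact (hDopen.frontier_eq ▸ hx).2 hxD
  · rw [frontier_compl, union_comm]
    exact (hU.frontier_connectedComponentIn_subset x₀).trans
      ((frontier_diff_subset _ _).trans (union_subset_union_right _ hΓ.frontier_subset))
  · rw [hgfr]
    exact ((hasPropertyS_image_Icc hγt).union (hasPropertyS_image_Icc hg)).isLocallyConnectedSet

/-- Let `Ω` be a bounded Jordan domain, `γ : [0,T] → closure Ω` continuous avoiding an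
interior point `x₀`, and `Ω(t)` the component of `x₀` in `Ω \ γ[0,t]`. Then the closed set
`ℂ \ Ω(t)` is locally connected. -/
theorem complement_locally_connected
    (D : Set ℂ) (hD : IsJordanDomain D) (x₀ : ℂ) (hx₀ : x₀ ∈ D)
    (T : ℝ) (hT : 0 < T) (γ : ℝ → ℂ)
    (hγ : ContinuousOn γ (Set.Icc 0 T))
    (hγD : ∀ s ∈ Set.Icc (0:ℝ) T, γ s ∈ closure D)
    (havoid : ∀ s ∈ Set.Icc (0:ℝ) T, γ s ≠ x₀)
    (t : ℝ) (ht : t ∈ Set.Ioc 0 T) :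
    IsLocallyConnectedSet ((connectedComponentIn (D \ γ '' Set.Icc 0 t) x₀)ᶜ) :=
  complement_locally_connected_general D hD x₀ T γ hγ t ht
end
end

section
/- Suppose (X_n, Y_n) are random variables on a product of Polish spaces converging almost surely to (X, Y), such that the conditional law of Y_n given X_n converges almost surely (weakly) to a fixed deterministic law μ. Then Y is independent of X and Y has law μ. -/
open Filter MeasureTheory ProbabilityTheory

/-!
Since `g(Xₙ)` is `σ(Xₙ)`-measurable, `E[g(Xₙ) f(Yₙ)] = E[g(Xₙ) E[f(Yₙ) | Xₙ]]`. Letting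
`n → ∞` by bounded convergence on both sides gives `E[g(X) f(Y)] = E[g(X)] ∫ f dμ` for all
bounded continuous `f` and `g`. Taking `g = 1` identifies the law of `Y` as `μ`, and then the
identity is the product formula that characterises independence of `X` and `Y`.
-/

open scoped Topology BoundedContinuousFunction

namespace MeasureTheory

variable {Ω : Type*} {m m₀ : MeasurableSpace Ω} {μ : Measure Ω}

lemma integral_mul_condExp_of_bound [IsFiniteMeasure μ] (hm : m ≤ m₀) {g Z : Ω → ℝ}
    (hg : StronglyMeasurable[m] g) (c : ℝ) (hg_bound : ∀ᵐ ω ∂μ, ‖g ω‖ ≤ c)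
    (hZ : Integrable Z μ) :
    ∫ ω, g ω * μ[Z | m] ω ∂μ = ∫ ω, g ω * Z ω ∂μ :=
  calc ∫ ω, g ω * μ[Z | m] ω ∂μ = ∫ ω, μ[g * Z | m] ω ∂μ :=
        integral_congr_ae (condExp_stronglyMeasurable_mul_of_bound hm hg hZ c hg_bound).symm
    _ = ∫ ω, g ω * Z ω ∂μ := integral_condExp hm

end MeasureTheory

namespace ProbabilityTheory

variable {Ω E F : Type*} [MeasurableSpace Ω] {P : Measure Ω} [IsFiniteMeasure P]
  [TopologicalSpace E] [MeasurableSpace E] [OpensMeasurableSpace E]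
  [TopologicalSpace F] [MeasurableSpace F] [OpensMeasurableSpace F]

lemma integral_comp_mul_condExp_comap (g : E →ᵇ ℝ) (f : F →ᵇ ℝ) {X : Ω → E} {Y : Ω → F}
    (hX : Measurable X) (hY : Measurable Y) :
    ∫ ω, g (X ω) * P[f ∘ Y | MeasurableSpace.comap X ‹_›] ω ∂P = ∫ ω, g (X ω) * f (Y ω) ∂P :=
  integral_mul_condExp_of_bound hX.comap_le
    (g.continuous.measurable.comp (Measurable.of_comap_le le_rfl)).stronglyMeasurable ‖g‖
    (.of_forall fun _ ↦ g.norm_coe_le_norm _) ((f.integrable (P.map Y)).comp_measurable hY)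

lemma integral_comp_mul_comp_eq_of_tendsto_condExp (g : E →ᵇ ℝ) (f : F →ᵇ ℝ)
    {X : ℕ → Ω → E} {Y : ℕ → Ω → F} {Xl : Ω → E} {Yl : Ω → F} {c : ℝ}
    (hX : ∀ n, Measurable (X n)) (hY : ∀ n, Measurable (Y n))
    (hconv : ∀ᵐ ω ∂P, Tendsto (X · ω) atTop (𝓝 (Xl ω)) ∧ Tendsto (Y · ω) atTop (𝓝 (Yl ω)))
    (hcond : ∀ᵐ ω ∂P,
      Tendsto (fun n ↦ P[f ∘ Y n | MeasurableSpace.comap (X n) ‹_›] ω) atTop (𝓝 c)) :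
    ∫ ω, g (Xl ω) * f (Yl ω) ∂P = (∫ ω, g (Xl ω) ∂P) * c := by
  have lim_joint : Tendsto (fun n ↦ ∫ ω, g (X n ω) * f (Y n ω) ∂P) atTop
      (𝓝 (∫ ω, g (Xl ω) * f (Yl ω) ∂P)) := by
    refine tendsto_integral_of_dominated_convergence (fun _ ↦ ‖g‖ * ‖f‖)
      (fun n ↦ (g.continuous.measurable.comp (hX n)).mul
        (f.continuous.measurable.comp (hY n)) |>.aestronglyMeasurable)
      (integrable_const _) (fun n ↦ .of_forall fun ω ↦ ?_) ?_
    · rw [norm_mul]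
      exact mul_le_mul (g.norm_coe_le_norm _) (f.norm_coe_le_norm _) (norm_nonneg _)
        (norm_nonneg _)
    · filter_upwards [hconv] with ω hω
      exact ((g.continuous.tendsto _).comp hω.1).mul ((f.continuous.tendsto _).comp hω.2)
  have lim_cond : Tendsto
      (fun n ↦ ∫ ω, g (X n ω) * P[f ∘ Y n | MeasurableSpace.comap (X n) ‹_›] ω ∂P) atTop
      (𝓝 (∫ ω, g (Xl ω) * c ∂P)) := by
    refine tendsto_integral_of_dominated_convergence (fun _ ↦ ‖g‖ * ‖f‖)
      (fun n ↦ (g.continuous.measurable.comp (hX n)).aestronglyMeasurable.mul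
        (stronglyMeasurable_condExp.mono (hX n).comap_le).aestronglyMeasurable)
      (integrable_const _) (fun n ↦ ?_) ?_
    · have hf_bound : ∀ᵐ ω ∂P, |(f ∘ Y n) ω| ≤ ‖f‖ :=
        .of_forall fun ω ↦ (Real.norm_eq_abs _).symm.trans_le (f.norm_coe_le_norm _)
      filter_upwards [ae_bdd_abs_condExp_of_ae_bdd_abs (m := MeasurableSpace.comap (X n) ‹_›)
        hf_bound] with ω hω
      rw [norm_mul, Real.norm_eq_abs (P[_ | _] ω)]
      exact mul_le_mul (g.norm_coe_le_norm _) hω (abs_nonneg _) (norm_nonneg _)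
    · filter_upwards [hconv, hcond] with ω hω hωc
      exact ((g.continuous.tendsto _).comp hω.1).mul hωc
  simp_rw [← integral_comp_mul_condExp_comap g f (hX _) (hY _)] at lim_joint
  rw [tendsto_nhds_unique lim_joint lim_cond, integral_mul_const]

end ProbabilityTheory

theorem indep_of_conditional_law_convergence_general
    {Ω E F : Type*} [MeasureSpace Ω] [IsProbabilityMeasure (volume : Measure Ω)]
    [MetricSpace E] [MeasurableSpace E] [BorelSpace E]
    [MetricSpace F] [MeasurableSpace F] [BorelSpace F]
    (X : ℕ → Ω → E) (Y : ℕ → Ω → F) (Xl : Ω → E) (Yl : Ω → F)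
    (μ : Measure F) [IsProbabilityMeasure μ]
    (hmX : ∀ n, Measurable (X n)) (hmY : ∀ n, Measurable (Y n))
    (hmXl : Measurable Xl) (hmYl : Measurable Yl)
    (hconv : ∀ᵐ ω ∂(volume : Measure Ω),
      Tendsto (fun n => X n ω) atTop (nhds (Xl ω)) ∧
      Tendsto (fun n => Y n ω) atTop (nhds (Yl ω)))
    (hcond : ∀ f : BoundedContinuousFunction F ℝ,
      ∀ᵐ ω ∂(volume : Measure Ω),
        Tendsto (fun n =>
            (MeasureTheory.condExp (MeasurableSpace.comap (X n) inferInstance)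
              volume (fun ω' => f (Y n ω'))) ω)
          atTop (nhds (∫ y, f y ∂μ))) :
    IndepFun Xl Yl volume ∧ Measure.map Yl volume = μ := by
  have product_formula (g : E →ᵇ ℝ) (f : F →ᵇ ℝ) :
      ∫ ω, g (Xl ω) * f (Yl ω) = (∫ ω, g (Xl ω)) * ∫ y, f y ∂μ :=
    integral_comp_mul_comp_eq_of_tendsto_condExp g f hmX hmY hconv (hcond f)
  have law : Measure.map Yl volume = μ := by
    refine ext_of_forall_integral_eq_of_IsFiniteMeasure fun f ↦ ?_
    rw [integral_map hmYl.aemeasurable f.continuous.aestronglyMeasurable]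
    simpa using product_formula 1 f
  refine ⟨indepFun_of_bcf hmXl.aemeasurable hmYl.aemeasurable fun g f ↦ ?_, law⟩
  have hf : ∫ ω, f (Yl ω) = ∫ y, f y ∂μ := by
    rw [← law, integral_map hmYl.aemeasurable f.continuous.aestronglyMeasurable]
  simpa [hf] using product_formula g f

/-- Suppose `(Xₙ, Yₙ)` are random variables with values in Polish spaces converging almost
surely to `(X, Y)`, and the conditional law of `Yₙ` given `Xₙ` converges almost surely
(weakly, i.e. tested against bounded continuous functions via conditional expectations) to a
fixed deterministic law `μ`. Then `Y` is independent of `X` and `Y` has law `μ`. -/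
theorem indep_of_conditional_law_convergence
    {Ω E F : Type*} [MeasureSpace Ω] [IsProbabilityMeasure (volume : Measure Ω)]
    [MetricSpace E] [CompleteSpace E] [TopologicalSpace.SeparableSpace E]
    [MeasurableSpace E] [BorelSpace E]
    [MetricSpace F] [CompleteSpace F] [TopologicalSpace.SeparableSpace F]
    [MeasurableSpace F] [BorelSpace F]
    (X : ℕ → Ω → E) (Y : ℕ → Ω → F) (Xl : Ω → E) (Yl : Ω → F)
    (μ : Measure F) [IsProbabilityMeasure μ]
    (hmX : ∀ n, Measurable (X n)) (hmY : ∀ n, Measurable (Y n))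
    (hmXl : Measurable Xl) (hmYl : Measurable Yl)
    (hconv : ∀ᵐ ω ∂(volume : Measure Ω),
      Tendsto (fun n => X n ω) atTop (nhds (Xl ω)) ∧
      Tendsto (fun n => Y n ω) atTop (nhds (Yl ω)))
    (hcond : ∀ f : BoundedContinuousFunction F ℝ,
      ∀ᵐ ω ∂(volume : Measure Ω),
        Tendsto (fun n =>
            (MeasureTheory.condExp (MeasurableSpace.comap (X n) inferInstance)
              volume (fun ω' => f (Y n ω'))) ω)
          atTop (nhds (∫ y, f y ∂μ))) :
    IndepFun Xl Yl volume ∧ Measure.map Yl volume = μ :=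
  indep_of_conditional_law_convergence_general X Y Xl Yl μ hmX hmY hmXl hmYl hconv hcond
end
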